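/- arXiv:1003.1782 — 2 statements merged into one kernel-verified Lean document; each statement's English description precedes it below -/
import Mathlib

section
/- Fix a = (a_0, a_1, …, a_n) ∈ ℝ_{>0}^{n+1} with a_0 < 1 and a_0 + a_1 + ⋯ + a_n ≥ 1. Let α_1, …, α_n be positive real numbers and let (b_1, …, b_n) ∈ Θ_a satisfy α_1 b_1 + ⋯ + α_n b_n = min{ α_1 x_1 + ⋯ + α_n x_n : (x_1, …, x_n) ∈ Θ_a }. Then (b_1, …, b_n) does not lie on the boundary of the simplex Δ_n; that is, b_i > 0 for all i = 1, …, n and b_1 + ⋯ + b_n < 1. -/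
/-!
If `∑ bᵢ = 1`, rescaling `b` by `1 - a₀` keeps it in `Θ_a`: the zeroth coordinate becomes `a₀`,
whose term of `φ_a` vanishes, and the rescaling adds `-(1 - a₀) log (1 - a₀) > 0`; but it strictly
decreases the positive linear form. If some `b_j = 0`, move a mass `ε` into coordinate `j`, taken
from a coordinate `k` with `b_k > 0` and from the slack `1 - ∑ bᵢ`. This changes `φ_a` by
`-ε log ε + O(ε)`, which is positive for small `ε` since `-x log x` has infinite slope at `0`,
and a suitable split of the mass lowers the linear form.
-/

/-- The characteristic function `φ_a(x_0, …, x_n) = −Σ x_i log x_i + Σ x_i log a_i`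
(with the convention `0 · log 0 = 0`). -/
noncomputable def charFn {n : ℕ} (a x : Fin (n + 1) → ℝ) : ℝ :=
  -∑ i, x i * Real.log (x i) + ∑ i, x i * Real.log (a i)

/-- `Θ_a = {x ∈ Δ_n : φ_a(1 − x_1 − ⋯ − x_n, x_1, …, x_n) ≥ 0}`. -/
def Theta {n : ℕ} (a : Fin (n + 1) → ℝ) : Set (Fin n → ℝ) :=
  {x | (∀ i, 0 ≤ x i) ∧ ∑ i, x i ≤ 1 ∧
    0 ≤ charFn a (Fin.cons (1 - ∑ i, x i) x)}

open Real Filter Topology Function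

theorem Fintype.sum_apply_update {ι β M : Type*} [Fintype ι] [DecidableEq ι] [AddCommGroup M]
    (F : ι → β → M) (f : ι → β) (j : ι) (y : β) :
    ∑ i, F i (update f j y i) = ∑ i, F i (f i) + (F j y - F j (f j)) := by
  simp_rw [apply_update F f]
  rw [Finset.sum_update_of_mem (Finset.mem_univ j), ← Finset.add_sum_erase _ _ (Finset.mem_univ j),
    Finset.sdiff_singleton_eq_erase]
  abel

theorem eventually_pos_add_negMulLog {g : ℝ → ℝ} (hg : DifferentiableAt ℝ g 0) (hg0 : g 0 = 0) :
    ∀ᶠ ε in 𝓝[>] (0 : ℝ), 0 < g ε + negMulLog ε := by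
  have hslope : Tendsto (fun ε => g ε / ε) (𝓝[>] 0) (𝓝 (deriv g 0)) := by
    simpa [hg0, div_eq_inv_mul] using hg.hasDerivAt.tendsto_slope_zero_right
  have hdiv : Tendsto (fun ε => g ε / ε + -log ε) (𝓝[>] 0) atTop :=
    hslope.add_atTop (tendsto_neg_atBot_atTop.comp tendsto_log_nhdsGT_zero)
  filter_upwards [hdiv.eventually_gt_atTop 0, self_mem_nhdsWithin] with ε hpos (hε : 0 < ε)
  have hsplit : g ε + negMulLog ε = ε * (g ε / ε + -log ε) := by
    rw [negMulLog]; field_simp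
  exact hsplit ▸ mul_pos hε hpos

noncomputable def charTerm (c y : ℝ) : ℝ :=
  negMulLog y + y * log c

theorem charTerm_zero (c : ℝ) : charTerm c 0 = 0 := by
  simp [charTerm]

theorem charTerm_self (c : ℝ) : charTerm c c = 0 := by
  simp [charTerm, negMulLog]

theorem charTerm_mul (c t y : ℝ) : charTerm c (t * y) = t * charTerm c y + y * negMulLog t := by
  rw [charTerm, charTerm, negMulLog_mul]
  ring

@[fun_prop]
theorem DifferentiableAt.charTerm (c : ℝ) {f : ℝ → ℝ} {x : ℝ} (hf : DifferentiableAt ℝ f x)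
    (hx : f x ≠ 0) : DifferentiableAt ℝ (fun y => charTerm c (f y)) x :=
  ((differentiableAt_negMulLog hx).comp x hf).add (hf.mul_const _)

theorem charFn_eq_sum {n : ℕ} (a x : Fin (n + 1) → ℝ) :
    charFn a x = ∑ i, charTerm (a i) (x i) := by
  simp only [charFn, charTerm, negMulLog, Finset.sum_add_distrib, neg_mul, Finset.sum_neg_distrib]

theorem charFn_cons {n : ℕ} (a : Fin (n + 1) → ℝ) (x₀ : ℝ) (x : Fin n → ℝ) :
    charFn a (Fin.cons x₀ x) = charTerm (a 0) x₀ + ∑ i, charTerm (a i.succ) (x i) := by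
  simp [charFn_eq_sum, Fin.sum_univ_succ]

section Theta

variable {n : ℕ} {a : Fin (n + 1) → ℝ}

theorem mem_Theta_iff {x : Fin n → ℝ} :
    x ∈ Theta a ↔ (∀ i, 0 ≤ x i) ∧ ∑ i, x i ≤ 1 ∧
      0 ≤ charTerm (a 0) (1 - ∑ i, x i) + ∑ i, charTerm (a i.succ) (x i) := by
  rw [Theta, Set.mem_ofPred_eq, charFn_cons]

theorem exists_pos_of_mem_Theta (ha₀ : 0 < a 0) (ha₀₁ : a 0 < 1) {b : Fin n → ℝ}
    (hb : b ∈ Theta a) : ∃ k, 0 < b k := by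
  by_contra! hle
  obtain rfl : b = 0 := funext fun i => le_antisymm (hle i) (hb.1 i)
  have hφ := (mem_Theta_iff.1 hb).2.2
  simp only [Pi.zero_apply, charTerm_zero, Finset.sum_const_zero, sub_zero, add_zero] at hφ
  rw [charTerm, negMulLog_one, one_mul, zero_add] at hφ
  exact (log_neg ha₀ ha₀₁).not_ge hφ

theorem smul_mem_Theta_of_sum_eq_one (ha₀ : 0 < a 0) (ha₀₁ : a 0 < 1) {b : Fin n → ℝ}
    (hb : b ∈ Theta a) (hsum : ∑ i, b i = 1) : (1 - a 0) • b ∈ Theta a := by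
  obtain ⟨hb₀, -, hφ⟩ := mem_Theta_iff.1 hb
  have ht : 0 < 1 - a 0 := by linarith
  have hsum' : ∑ i, ((1 - a 0) • b) i = 1 - a 0 := by
    simp [← Finset.mul_sum, hsum]
  refine mem_Theta_iff.2 ⟨fun i => mul_nonneg ht.le (hb₀ i), by linarith, ?_⟩
  rw [hsum, sub_self, charTerm_zero, zero_add] at hφ
  have hnegMulLog : 0 < negMulLog (1 - a 0) := by
    rw [negMulLog_eq_neg]; linarith [mul_log_neg ht (by linarith : 1 - a 0 < 1)]
  rw [hsum', sub_sub_cancel, charTerm_self, zero_add]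
  simp only [Pi.smul_apply, smul_eq_mul, charTerm_mul, Finset.sum_add_distrib, ← Finset.mul_sum,
    ← Finset.sum_mul, hsum, one_mul]
  exact add_nonneg (mul_nonneg ht.le hφ) hnegMulLog.le

theorem sum_lt_one_of_isMinOn (ha₀ : 0 < a 0) (ha₀₁ : a 0 < 1) {α b : Fin n → ℝ}
    (hα : ∀ i, 0 < α i) (hb : b ∈ Theta a)
    (hmin : IsMinOn (fun x => ∑ i, α i * x i) (Theta a) b) : ∑ i, b i < 1 := by
  refine (mem_Theta_iff.1 hb).2.1.lt_of_ne fun hsum => ?_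
  obtain ⟨k, hk⟩ := exists_pos_of_mem_Theta ha₀ ha₀₁ hb
  have hpos : 0 < ∑ i, α i * b i := Finset.sum_pos' (fun i _ => mul_nonneg (hα i).le (hb.1 i))
    ⟨k, Finset.mem_univ k, mul_pos (hα k) hk⟩
  have hle := isMinOn_iff.1 hmin _ (smul_mem_Theta_of_sum_eq_one ha₀ ha₀₁ hb hsum)
  simp only [Pi.smul_apply, smul_eq_mul, mul_left_comm _ (1 - a 0), ← Finset.mul_sum] at hle
  nlinarith

theorem eventually_update_update_mem_Theta {b : Fin n → ℝ} (hb : b ∈ Theta a)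
    (hlt : ∑ i, b i < 1) {j k : Fin n} (hjk : j ≠ k) (hbj : b j = 0) (hbk : 0 < b k) (C : ℝ) :
    ∀ᶠ ε in 𝓝[>] (0 : ℝ), update (update b k (b k - C * ε)) j ε ∈ Theta a := by
  obtain ⟨hb₀, -, hφ⟩ := mem_Theta_iff.1 hb
  set x₀ := 1 - ∑ i, b i
  -- At the perturbed point, `φ_a` equals its value at `b` plus `g ε + negMulLog ε`.
  set g : ℝ → ℝ := fun ε => (charTerm (a 0) (x₀ - (1 - C) * ε) - charTerm (a 0) x₀)
    + (charTerm (a k.succ) (b k - C * ε) - charTerm (a k.succ) (b k)) + ε * log (a j.succ)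
  have hg : DifferentiableAt ℝ g 0 := by
    have hx₀ : x₀ - (1 - C) * 0 ≠ 0 := by simpa using (sub_pos.2 hlt).ne'
    have hbk' : b k - C * 0 ≠ 0 := by simpa using hbk.ne'
    fun_prop (disch := assumption)
  have hsmall : ∀ᶠ ε in 𝓝[>] (0 : ℝ), C * ε < b k ∧ (1 - C) * ε < x₀ := by
    refine Eventually.filter_mono nhdsWithin_le_nhds (Eventually.and ?_ ?_)
    · exact (continuous_const_mul C).tendsto' 0 0 (mul_zero C) |>.eventually_lt_const hbk
    · exact (continuous_const_mul (1 - C)).tendsto' 0 0 (mul_zero _) |>.eventually_lt_const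
        (sub_pos.2 hlt)
  filter_upwards [eventually_pos_add_negMulLog hg (by simp [g]), self_mem_nhdsWithin, hsmall]
    with ε hpos (hε : 0 < ε) ⟨hCε, hx₀ε⟩
  have hsum : ∑ i, update (update b k (b k - C * ε)) j ε i = ∑ i, b i + (1 - C) * ε := by
    rw [Fintype.sum_apply_update (fun _ t => t), Fintype.sum_apply_update (fun _ t => t),
      update_of_ne hjk, hbj]
    ring
  refine mem_Theta_iff.2 ⟨fun i => ?_, by linarith, ?_⟩
  · simp only [update_apply]
    split_ifs <;> linarith [hb₀ i]
  · rw [hsum, Fintype.sum_apply_update (fun i : Fin n => charTerm (a i.succ)),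
      Fintype.sum_apply_update (fun i : Fin n => charTerm (a i.succ)), update_of_ne hjk, hbj,
      charTerm_zero, show 1 - (∑ i, b i + (1 - C) * ε) = x₀ - (1 - C) * ε by ring]
    simp only [g, charTerm] at hpos hφ ⊢
    linarith

theorem pos_of_isMinOn_of_sum_lt_one (ha₀ : 0 < a 0) (ha₀₁ : a 0 < 1) {α b : Fin n → ℝ}
    (hα : ∀ i, 0 < α i) (hb : b ∈ Theta a)
    (hmin : IsMinOn (fun x => ∑ i, α i * x i) (Theta a) b) (hlt : ∑ i, b i < 1) (j : Fin n) :
    0 < b j := by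
  refine (hb.1 j).lt_of_ne' fun hbj => ?_
  obtain ⟨k, hk⟩ := exists_pos_of_mem_Theta ha₀ ha₀₁ hb
  have hjk : j ≠ k := by rintro rfl; exact hk.ne' hbj
  -- Taking `2 α_j / α_k` times the new mass out of coordinate `k` lowers the form by `α_j ε`.
  obtain ⟨ε, hmem, hε⟩ := ((eventually_update_update_mem_Theta hb hlt hjk hbj hk
    (2 * α j / α k)).and self_mem_nhdsWithin).exists
  have hle := isMinOn_iff.1 hmin _ hmem
  rw [Fintype.sum_apply_update (fun i t => α i * t),
    Fintype.sum_apply_update (fun i t => α i * t), update_of_ne hjk, hbj] at hle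
  have hshift : α k * (2 * α j / α k * ε) = 2 * α j * ε := by field_simp [(hα k).ne']
  nlinarith [mul_pos (hα j) (show 0 < ε from hε)]

end Theta

theorem minimizer_not_on_simplex_boundary_general (n : ℕ) (a : Fin (n + 1) → ℝ)
    (ha : ∀ i, 0 < a i) (ha0 : a 0 < 1)
    (α : Fin n → ℝ) (hα : ∀ i, 0 < α i)
    (b : Fin n → ℝ) (hbΘ : b ∈ Theta a)
    (hmin : ∀ x ∈ Theta a, ∑ i, α i * b i ≤ ∑ i, α i * x i) :
    (∀ i, 0 < b i) ∧ ∑ i, b i < 1 := by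
  have hmin' : IsMinOn (fun x => ∑ i, α i * x i) (Theta a) b := isMinOn_iff.2 hmin
  have hlt := sum_lt_one_of_isMinOn (ha 0) ha0 hα hbΘ hmin'
  exact ⟨pos_of_isMinOn_of_sum_lt_one (ha 0) ha0 hα hbΘ hmin' hlt, hlt⟩

/-- Corollary 4.4: if `a_0 < 1 ≤ a_0 + ⋯ + a_n` and a point `b ∈ Θ_a`
minimizes the positive linear form `Σ α_i x_i` on `Θ_a`, then `b` does not lie
on the boundary of the simplex `Δ_n`: all `b_i > 0` and `Σ b_i < 1`. -/
theorem minimizer_not_on_simplex_boundary (n : ℕ) (a : Fin (n + 1) → ℝ)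
    (ha : ∀ i, 0 < a i) (ha0 : a 0 < 1) (hsum : 1 ≤ ∑ i, a i)
    (α : Fin n → ℝ) (hα : ∀ i, 0 < α i)
    (b : Fin n → ℝ) (hbΘ : b ∈ Theta a)
    (hmin : ∀ x ∈ Theta a, ∑ i, α i * b i ≤ ∑ i, α i * x i) :
    (∀ i, 0 < b i) ∧ ∑ i, b i < 1 :=
  minimizer_not_on_simplex_boundary_general n a ha ha0 α hα b hbΘ hmin
end

section
/- Fix a positive integer l and positive rational numbers a'_1, …, a'_n with a'_1 + ⋯ + a'_n < 1 and a'_i < 1/l for every i = 1, …, n; set a'_0 = 1 − a'_1 − ⋯ − a'_n and a' = (a'_0, a'_1, …, a'_n). For a rational number λ > 1 let K_λ = { (x_1, …, x_n) ∈ Δ_n : φ_{a'}(1 − x_1 − ⋯ − x_n, x_1, …, x_n) + log λ ≥ 0 }. Then there exists a rational number λ > 1 such that K_λ ⊆ (0, 1/l)^n. -/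
open Real Finset InformationTheory

lemma mul_log_sub_mul_log_eq_sub_sub_mul_klFun {b : ℝ} (hb : 0 < b) (y : ℝ) :
    y * log b - y * log y = b - y - b * klFun (y / b) := by
  rcases eq_or_ne y 0 with rfl | hy
  · simp [klFun_zero]
  · rw [klFun_apply, log_div hy hb.ne']
    field_simp
    ring

theorem charFn_neg_of_ne {m : ℕ} {a y : Fin (m + 1) → ℝ} (ha : ∀ i, 0 < a i)
    (hy : ∀ i, 0 ≤ y i) (hsum : ∑ i, y i = ∑ i, a i) (hne : y ≠ a) : charFn a y < 0 := by
  obtain ⟨j, hj⟩ := Function.ne_iff.mp hne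
  have hkl_pos : 0 < ∑ i, a i * klFun (y i / a i) := by
    refine sum_pos' (fun i _ => mul_nonneg (ha i).le (klFun_nonneg (div_nonneg (hy i) (ha i).le)))
      ⟨j, mem_univ j, mul_pos (ha j) ?_⟩
    refine (klFun_nonneg (div_nonneg (hy j) (ha j).le)).lt_of_ne' ?_
    rwa [ne_eq, klFun_eq_zero_iff (div_nonneg (hy j) (ha j).le), div_eq_one_iff_eq (ha j).ne']
  have hcharFn : charFn a y = -∑ i, a i * klFun (y i / a i) :=
    calc charFn a y = ∑ i, (y i * log (a i) - y i * log (y i)) := by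
          rw [charFn, sum_sub_distrib]; ring
      _ = ∑ i, (a i - y i - a i * klFun (y i / a i)) :=
          sum_congr rfl fun i _ => mul_log_sub_mul_log_eq_sub_sub_mul_klFun (ha i) (y i)
      _ = -∑ i, a i * klFun (y i / a i) := by
          rw [sum_sub_distrib, sum_sub_distrib, hsum]; ring
  linarith

theorem continuous_charFn {m : ℕ} (a : Fin (m + 1) → ℝ) : Continuous (charFn a) := by
  unfold charFn
  fun_prop

/-- The set `Δ_n` of the paper. -/
def cornerSimplex (n : ℕ) : Set (Fin n → ℝ) := {x | (∀ i, 0 ≤ x i) ∧ ∑ i, x i ≤ 1}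

theorem isCompact_cornerSimplex (n : ℕ) : IsCompact (cornerSimplex n) := by
  refine isCompact_Icc.of_isClosed_subset ?_ fun x ⟨hx0, hx1⟩ =>
    ⟨hx0, fun i => (single_le_sum (fun j _ => hx0 j) (mem_univ i)).trans hx1⟩
  exact (isClosed_Ici (a := (0 : Fin n → ℝ))).inter
    (isClosed_le (continuous_finsetSum _ fun i _ => continuous_apply i) continuous_const)

theorem charFn_cons_neg_of_ne {n : ℕ} {a x : Fin n → ℝ} (ha : ∀ i, 0 < a i)
    (ha_sum : ∑ i, a i < 1) (hx : x ∈ cornerSimplex n) (hne : x ≠ a) :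
    charFn (Fin.cons (1 - ∑ i, a i) a) (Fin.cons (1 - ∑ i, x i) x) < 0 := by
  refine charFn_neg_of_ne (Fin.cases (sub_pos.mpr ha_sum) ha)
    (Fin.cases (sub_nonneg.mpr hx.2) hx.1) ?_ fun h => hne (Fin.cons_inj.mp h).2
  simp only [Fin.sum_cons, sub_add_cancel]

theorem continuous_charFn_cons (n : ℕ) (a : Fin (n + 1) → ℝ) :
    Continuous fun x : Fin n → ℝ => charFn a (Fin.cons (1 - ∑ i, x i) x) :=
  (continuous_charFn a).comp <|
    (show Continuous fun x : Fin n → ℝ => 1 - ∑ i, x i by fun_prop).finCons continuous_id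

theorem IsCompact.exists_rat_one_lt_forall_add_log_neg {X : Type*} [TopologicalSpace X]
    {K : Set X} (hK : IsCompact K) {f : X → ℝ} (hf : ContinuousOn f K)
    (hneg : ∀ x ∈ K, f x < 0) : ∃ q : ℚ, 1 < q ∧ ∀ x ∈ K, f x + log q < 0 := by
  obtain ⟨ε, hε, hfε⟩ := hK.exists_forall_le' hf.neg fun x hx => neg_pos.mpr (hneg x hx)
  obtain ⟨q, hq1, hqε⟩ := exists_rat_btwn (one_lt_exp_iff.mpr hε)
  have hlog : log q < ε := (log_lt_iff_lt_exp (by linarith)).mpr hqε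
  refine ⟨q, by exact_mod_cast hq1, fun x hx => ?_⟩
  linarith [show ε ≤ -f x from hfε x hx]

theorem exists_lambda_K_subset_general (n : ℕ) (l : ℕ)
    (a' : Fin n → ℚ) (ha' : ∀ i, 0 < a' i)
    (hsum : ∑ i, a' i < 1) (hsmall : ∀ i, a' i < 1 / (l : ℚ)) :
    ∃ lam : ℚ, 1 < lam ∧
      ∀ x : Fin n → ℝ,
        ((∀ i, 0 ≤ x i) ∧ ∑ i, x i ≤ 1 ∧
          0 ≤ charFn (Fin.cons (1 - ∑ i, (a' i : ℝ)) (fun i => ((a' i : ℝ))))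
                (Fin.cons (1 - ∑ i, x i) x) + Real.log (lam : ℝ)) →
        ∀ i, 0 < x i ∧ x i < 1 / (l : ℝ) := by
  have ha'R : ∀ i, (0 : ℝ) < a' i := fun i => by exact_mod_cast ha' i
  set cube : Set (Fin n → ℝ) := Set.univ.pi fun _ => Set.Ioo 0 (1 / (l : ℝ))
  have ha'_cube : (fun i => (a' i : ℝ)) ∈ cube := fun i _ =>
    ⟨ha'R i, by simpa using (Rat.cast_lt (K := ℝ)).mpr (hsmall i)⟩
  have hneg : ∀ x ∈ cornerSimplex n \ cube,
      charFn (Fin.cons (1 - ∑ i, (a' i : ℝ)) (fun i => ((a' i : ℝ))))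
        (Fin.cons (1 - ∑ i, x i) x) < 0 := by
    rintro x ⟨hx, hx_cube⟩
    exact charFn_cons_neg_of_ne ha'R (by exact_mod_cast hsum) hx
      (by rintro rfl; exact hx_cube ha'_cube)
  obtain ⟨lam, hlam, hK⟩ := ((isCompact_cornerSimplex n).diff
    (isOpen_set_pi Set.finite_univ fun _ _ => isOpen_Ioo)).exists_rat_one_lt_forall_add_log_neg
    (continuous_charFn_cons n _).continuousOn hneg
  refine ⟨lam, hlam, fun x ⟨hx0, hx1, hx⟩ => ?_⟩
  by_contra hx_cube
  exact (hK x ⟨⟨hx0, hx1⟩, fun h => hx_cube fun i => h i trivial⟩).not_ge hx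

/-- The key Claim in the proof of the Proposition at the end of Section 2:
with `a'_1, …, a'_n` positive rationals with `Σ a'_i < 1`, `a'_i < 1/l`, and
`a'_0 = 1 − a'_1 − ⋯ − a'_n`, there is a rational `λ > 1` such that
`K_λ = {x ∈ Δ_n : φ_{a'}(1 − Σ x_i, x_1, …, x_n) + log λ ≥ 0} ⊆ (0, 1/l)^n`. -/
theorem exists_lambda_K_subset (n : ℕ) (l : ℕ) (hl : 1 ≤ l)
    (a' : Fin n → ℚ) (ha' : ∀ i, 0 < a' i)
    (hsum : ∑ i, a' i < 1) (hsmall : ∀ i, a' i < 1 / (l : ℚ)) :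
    ∃ lam : ℚ, 1 < lam ∧
      ∀ x : Fin n → ℝ,
        ((∀ i, 0 ≤ x i) ∧ ∑ i, x i ≤ 1 ∧
          0 ≤ charFn (Fin.cons (1 - ∑ i, (a' i : ℝ)) (fun i => ((a' i : ℝ))))
                (Fin.cons (1 - ∑ i, x i) x) + Real.log (lam : ℝ)) →
        ∀ i, 0 < x i ∧ x i < 1 / (l : ℝ) :=
  exists_lambda_K_subset_general n l a' ha' hsum hsmall
end
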